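/- Let u = (u(n))_{n≥1} be the sequence in F_q defined by recursion (3). Then u is r-automatic, i.e., its r-kernel { (u(r^i n + j))_{n≥1} : i ≥ 0, 0 ≤ j < r^i } is a finite set of sequences. -/

import Mathlib

/-!
With `L = ℓ + 1`, the recursion reads `u (L + r t + j) = f (t mod k) j (u (t + 1))` for
`0 ≤ j < r`. Dividing `j - L` by `r` turns the kernel sequence `n ↦ u (r^(i+1) n + j)` into
`n ↦ f (…) (…) (u (r^i n + j'))` with `j' = ⌊(j - L) / r⌋ + 1`, and the window
`-L ≤ j ≤ r^i + 1` is stable under `j ↦ j'`. By induction on `i`, every kernel sequence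
agrees for `n ≥ L` with `n ↦ Ψ (n mod k) (u (n + c))` for some `Ψ : ZMod k → F → F` and an
integer shift `-L ≤ c ≤ 2`. There are finitely many such `Ψ`, `c` and initial segments.
-/

open Set

def rKernel {α : Type*} (r : ℕ) (u : ℕ → α) : Set (ℕ → α) :=
  {w | ∃ i j : ℕ, j < r ^ i ∧ w = fun n => u (r ^ i * n + j)}

theorem finite_of_forall_agree_from {α ι : Type*} [Finite α] [Finite ι] {S : Set (ℕ → α)}
    (s : ι → ℕ → α) (N : ℕ) (h : ∀ w ∈ S, ∃ x, ∀ n, N ≤ n → w n = s x n) : S.Finite := by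
  refine (finite_range fun p : (Fin N → α) × ι => fun n =>
    if hn : n < N then p.1 ⟨n, hn⟩ else s p.2 n).subset ?_
  intro w hw
  obtain ⟨x, hx⟩ := h w hw
  refine ⟨(fun n => w n, x), funext fun n => ?_⟩
  by_cases hn : n < N
  · simp [hn]
  · simp [hn, hx n (not_lt.mp hn)]

section Recursion

variable {α : Type*} {L r k : ℕ} {u : ℕ → α} {f : ZMod k → ℕ → α → α}

theorem recursion_of_int_index (hu : ∀ t j : ℕ, j < r → u (L + r * t + j) = f t j (u (t + 1)))
    {T J : ℤ} (hT : 0 ≤ T) (hJ : 0 ≤ J) (hJr : J < r) :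
    u (L + r * T + J).toNat = f T J.toNat (u (T + 1).toNat) := by
  lift T to ℕ using hT
  lift J to ℕ using hJ
  have hidx : (L : ℤ) + r * T + J = ((L + r * T + J : ℕ) : ℤ) := by push_cast; ring
  rw [hidx, Int.toNat_natCast, Int.toNat_natCast, Int.cast_natCast]
  exact_mod_cast hu T J (by exact_mod_cast hJr)

/-- For small `n` the index `n + c` may be negative and truncated by `Int.toNat`; this is
harmless, since only the finiteness of the set of pairs `(Ψ, c)` is used. -/
theorem exists_kernel_shape (hr : 2 ≤ r)
    (hu : ∀ t j : ℕ, j < r → u (L + r * t + j) = f t j (u (t + 1)))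
    (i : ℕ) {j : ℤ} (hj₀ : -L ≤ j) (hj₁ : j ≤ r ^ i + 1) :
    ∃ Ψ : ZMod k → α → α, ∃ c ∈ Icc (-(L : ℤ)) 2, ∀ n : ℕ, L ≤ n →
      u (r ^ i * n + j).toNat = Ψ n (u (n + c).toNat) := by
  induction i generalizing j with
  | zero => exact ⟨fun _ y => y, j, ⟨hj₀, by simpa using hj₁⟩, fun n _ => by simp⟩
  | succ i ih =>
    have hr₀ : (0 : ℤ) < r := by omega
    set e := (j - L) / r with he
    have he₀ : -L ≤ e := by
      rw [he, Int.le_ediv_iff_mul_le hr₀]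
      nlinarith
    have he₁ : e ≤ r ^ i := by
      have : e < r ^ i + 1 := by
        rw [he, Int.ediv_lt_iff_lt_mul hr₀]
        nlinarith [pow_succ (r : ℤ) i]
      omega
    obtain ⟨Ψ, c, hc, hΨ⟩ := ih (j := e + 1) (by omega) (by omega)
    refine ⟨fun x y => f (r ^ i * x + e) ((j - L) % r).toNat (Ψ x y), c, hc, fun n hn => ?_⟩
    have hT : 0 ≤ (r : ℤ) ^ i * n + e := by
      have : (n : ℤ) ≤ (r : ℤ) ^ i * n :=
        le_mul_of_one_le_left (by positivity) (one_le_pow₀ (by omega))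
      omega
    have hidx : (r : ℤ) ^ (i + 1) * n + j = L + r * (r ^ i * n + e) + (j - L) % r := by
      linear_combination (Int.mul_ediv_add_emod (j - L) r).symm
    rw [hidx, recursion_of_int_index hu hT (Int.emod_nonneg _ (by omega))
      (Int.emod_lt_of_pos _ hr₀), add_assoc, hΨ n hn]
    push_cast
    rfl

theorem finite_rKernel_of_recursion [Finite α] [NeZero k] (hr : 2 ≤ r)
    (hu : ∀ t j : ℕ, j < r → u (L + r * t + j) = f t j (u (t + 1))) :
    (rKernel r u).Finite := by
  refine finite_of_forall_agree_from
    (fun x : (ZMod k → α → α) × Icc (-(L : ℤ)) 2 => fun n : ℕ => x.1 n (u ((n : ℤ) + x.2).toNat))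
    L ?_
  rintro w ⟨i, j, hj, rfl⟩
  have hj' : (j : ℤ) < (r : ℤ) ^ i := by exact_mod_cast hj
  obtain ⟨Ψ, c, hc, hΨ⟩ := exists_kernel_shape hr hu i (j := j) (by omega) (by omega)
  refine ⟨(Ψ, ⟨c, hc⟩), fun n hn => ?_⟩
  refine (congrArg u ?_).trans (hΨ n hn)
  rw [← Int.toNat_natCast (r ^ i * n + j)]
  push_cast
  rfl

end Recursion

theorem recurrence_gamma_automatic_general {F : Type*} [Field F] [Fintype F]
    (ℓ r k : ℕ) (hr : 2 ≤ r) (hk : 1 ≤ k)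
    (u : ℕ → F) (α : ℕ → F) (β : ℕ → ℕ → F) (γ : ℕ)
    (hrec1 : ∀ m i : ℕ, i < k →
      u (ℓ + 1 + r * (k * m + i)) = α (i + 1) * (u (k * m + i + 1)) ^ γ)
    (hrec2 : ∀ m i : ℕ, i < k → ∀ j, 1 ≤ j → j < r →
      u (ℓ + 1 + r * (k * m + i) + j) = β i j) :
    Set.Finite {w : ℕ → F | ∃ i j : ℕ, j < r ^ i ∧ w = fun n => u (r ^ i * n + j)} := by
  have : NeZero k := ⟨by omega⟩
  let f : ZMod k → ℕ → F → F := fun x j y => if j = 0 then α (x.val + 1) * y ^ γ else β x.val j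
  have hu : ∀ t j : ℕ, j < r → u (ℓ + 1 + r * t + j) = f t j (u (t + 1)) := by
    intro t j hj
    obtain ⟨m, i, hi, rfl⟩ : ∃ m i, i < k ∧ t = k * m + i :=
      ⟨t / k, t % k, Nat.mod_lt _ (by omega), (Nat.div_add_mod t k).symm⟩
    rcases Nat.eq_zero_or_pos j with rfl | hj₀
    · simp [f, Nat.mod_eq_of_lt hi, hrec1 m i hi]
    · simp [f, Nat.mod_eq_of_lt hi, hj₀.ne', hrec2 m i hi j hj₀ hj]
  exact finite_rKernel_of_recursion hr hu

/-- Theorem 4 of the paper. Let `ℓ ≥ 1`, `r ≥ 2`, `k ≥ 1` with `k ∣ r`, `p` prime,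
`q = p^s`. Let `(u(n))_{n ≥ 1}` in `F_q` be defined by recursion (3): for all `m ≥ 0`
and `0 ≤ i < k`, `u(ℓ+1+r(km+i)) = α_{i+1} (u(km+i+1))^γ` and
`u(ℓ+1+r(km+i)+j) = β_{i,j}` for `1 ≤ j < r`, where the `α`'s are nonzero and `γ ≥ 1`
is coprime with `q - 1`. Then `u` is `r`-automatic, i.e. its `r`-kernel
`{ (u (r^i n + j))_{n ≥ 1} : i ≥ 0, 0 ≤ j < r^i }` is a finite set of sequences. -/
theorem recurrence_gamma_automatic {F : Type*} [Field F] [Fintype F]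
    (p s : ℕ) (hp : p.Prime) (hs : 1 ≤ s) (hcard : Fintype.card F = p ^ s)
    (ℓ r k : ℕ) (hℓ : 1 ≤ ℓ) (hr : 2 ≤ r) (hk : 1 ≤ k) (hkr : k ∣ r)
    (u : ℕ → F) (α : ℕ → F) (β : ℕ → ℕ → F) (γ : ℕ)
    (hγ : 1 ≤ γ) (hγcop : Nat.Coprime γ (Fintype.card F - 1))
    (hα : ∀ i, 1 ≤ i → i ≤ k → α i ≠ 0)
    (hrec1 : ∀ m i : ℕ, i < k →
      u (ℓ + 1 + r * (k * m + i)) = α (i + 1) * (u (k * m + i + 1)) ^ γ)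
    (hrec2 : ∀ m i : ℕ, i < k → ∀ j, 1 ≤ j → j < r →
      u (ℓ + 1 + r * (k * m + i) + j) = β i j) :
    Set.Finite {w : ℕ → F | ∃ i j : ℕ, j < r ^ i ∧ w = fun n => u (r ^ i * n + j)} :=
  recurrence_gamma_automatic_general ℓ r k hr hk u α β γ hrec1 hrec2
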